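/- There exists a universal constant C > 0 such that for every ε > 0 and every displacement u : Ω⁰_ε → ℝ, the total variation of the discrete dislocation measure is controlled by the discrete elastic energy: |μ_u|(Ω) ≤ C · SD_ε(u), where SD_ε(u) = ½ Σ_{(i,j) ∈ Ω¹_ε} dist²(u(i) − u(j), ℤ) and μ_u = Σ_{i ∈ Ω²_ε} α_u(i) δ_{i + (ε/2, ε/2)}. -/

import Mathlib

open MeasureTheory Filter

noncomputable section

/-- The position in `ℝ²` of the lattice point `i ∈ ℤ²` of the lattice `εℤ²`. -/
def pt (ε : ℝ) (i : ℤ × ℤ) : ℝ × ℝ := (ε * i.1, ε * i.2)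

/-- `i` is a point of the lattice `Ω⁰_ε = εℤ² ∩ Ω`. -/
def latticePt (ε : ℝ) (Ω : Set (ℝ × ℝ)) (i : ℤ × ℤ) : Prop := pt ε i ∈ Ω

/-- `(i, j)` is a nearest-neighbor bond in `Ω¹_ε`: both endpoints lie in `Ω` and
`j = i + e₁` or `j = i + e₂` (so that `|i − j| = ε` and `i ≤ j` componentwise). -/
def bond (ε : ℝ) (Ω : Set (ℝ × ℝ)) (i j : ℤ × ℤ) : Prop :=
  latticePt ε Ω i ∧ latticePt ε Ω j ∧ (j = i + (1, 0) ∨ j = i + (0, 1))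

/-- `i ∈ Ω²_ε`: the closed cell `i + [0, ε]²` is contained in `Ω`. -/
def cellIn (ε : ℝ) (Ω : Set (ℝ × ℝ)) (i : ℤ × ℤ) : Prop :=
  Set.Icc (pt ε i) (pt ε i + (ε, ε)) ⊆ Ω

/-- The center of the cell `i + [0, ε]²`. -/
def cellCenter (ε : ℝ) (i : ℤ × ℤ) : ℝ × ℝ := pt ε i + (ε / 2, ε / 2)

/-- The projection `P : ℝ → ℤ` onto the nearest integer (with the tie-breaking convention
making `t − P t ∈ (−1/2, 1/2]`). -/
def Pint (t : ℝ) : ℤ := ⌈t - 1 / 2⌉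

/-- The elastic part of the discrete strain of `u` on the (oriented) bond from `i` to `j`:
`β^e_u = 𝐝u − P(𝐝u) ∈ (−1/2, 1/2]`, where `𝐝u_{i,j} = u(j) − u(i)`. -/
def betaE (u : ℤ × ℤ → ℝ) (i j : ℤ × ℤ) : ℝ :=
  (u j - u i) - (Pint (u j - u i) : ℝ)

/-- The plastic part of the discrete strain: `β^p_u = P(𝐝u) ∈ ℤ`. -/
def betaP (u : ℤ × ℤ → ℝ) (i j : ℤ × ℤ) : ℝ := (Pint (u j - u i) : ℝ)

/-- The discrete curl of a bond function `ξ` around the cell with lower-left corner `i`: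
`𝐝ξ(i) = ξ_{i,i+e₂} + ξ_{i+e₂,i+e₁+e₂} − ξ_{i+e₁,i+e₁+e₂} − ξ_{i,i+e₁}`. -/
def dcurl (ξ : ℤ × ℤ → ℤ × ℤ → ℝ) (i : ℤ × ℤ) : ℝ :=
  ξ i (i + (0, 1)) + ξ (i + (0, 1)) (i + (1, 1)) - ξ (i + (1, 0)) (i + (1, 1)) -
    ξ i (i + (1, 0))

/-- The discrete dislocation function `α_u(i) = 𝐝β^e_u(i)`. -/
def alphaSD (u : ℤ × ℤ → ℝ) (i : ℤ × ℤ) : ℝ := dcurl (betaE u) i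

/-- The discrete screw-dislocation energy
`SD_ε(u) = ½ Σ_{(i,j) ∈ Ω¹_ε} dist²(u(i) − u(j), ℤ)`. -/
def SDen (ε : ℝ) (Ω : Set (ℝ × ℝ)) (u : ℤ × ℤ → ℝ) : ℝ :=
  (1 / 2) * ∑' b : {b : (ℤ × ℤ) × (ℤ × ℤ) // bond ε Ω b.1 b.2},
    (betaE u b.1.1 b.1.2) ^ 2

/-- The total variation `|μ_u|(Ω)` of the discrete dislocation measure
`μ_u = Σ_{i ∈ Ω²_ε} α_u(i) δ_{i+(ε/2,ε/2)}`. -/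
def SDtv (ε : ℝ) (Ω : Set (ℝ × ℝ)) (u : ℤ × ℤ → ℝ) : ℝ :=
  ∑' i : {i : ℤ × ℤ // cellIn ε Ω i}, |alphaSD u i|

/-- The phase `u(v) = θ(v)/2π ∈ [0, 1)` of a spin field `v` with values in `S¹ ⊆ ℂ`
(defined by `v = e^{2πi u(v)}`; any determination of the phase gives the same discrete
vorticity). -/
def phaseu (v : ℤ × ℤ → ℂ) (l : ℤ × ℤ) : ℝ :=
  if 0 ≤ (v l).arg then (v l).arg / (2 * Real.pi) else (v l).arg / (2 * Real.pi) + 1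

/-- The discrete vorticity `γ_v = α_{θ(v)/2π}` of a spin field `v`. -/
def gammaXY (v : ℤ × ℤ → ℂ) (i : ℤ × ℤ) : ℝ := alphaSD (phaseu v) i

/-- The `XY` energy `XY_ε(v) = ½ Σ_{(i,j) ∈ Ω¹_ε} |v(i) − v(j)|²`. -/
def XYen (ε : ℝ) (Ω : Set (ℝ × ℝ)) (v : ℤ × ℤ → ℂ) : ℝ :=
  (1 / 2) * ∑' b : {b : (ℤ × ℤ) × (ℤ × ℤ) // bond ε Ω b.1 b.2},
    ‖v b.1.1 - v b.1.2‖ ^ 2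

/-- The total variation `|μ_v|(Ω)` of the discrete vorticity measure. -/
def XYtv (ε : ℝ) (Ω : Set (ℝ × ℝ)) (v : ℤ × ℤ → ℂ) : ℝ :=
  ∑' i : {i : ℤ × ℤ // cellIn ε Ω i}, |gammaXY v i|

/-!
The elastic strain differs from the discrete gradient `𝐝u` by integers and the curl of a gradient
vanishes, so `α_u(i)` is an integer. For an integer `n` one has `|n| ≤ n²`, and by Cauchy–Schwarz
`α_u(i)² ≤ 4 Σ (β^e_u)²` over the four bonds of the cell. Each of the four maps sending a cell of
`Ω²_ε` to one of its bonds is injective into `Ω¹_ε`, so summing over the (finitely many) cells gives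
`|μ_u|(Ω) ≤ 16 Σ_{Ω¹_ε} (β^e_u)² = 32 SD_ε(u)`.
-/

section

variable {ε : ℝ} {Ω : Set (ℝ × ℝ)}

lemma dist_pt (hε : 0 ≤ ε) (i j : ℤ × ℤ) : dist (pt ε i) (pt ε j) = ε * dist i j := by
  simp only [pt, Prod.dist_eq, Real.dist_eq, Int.dist_eq, ← mul_sub, abs_mul, abs_of_nonneg hε,
    mul_max_of_nonneg _ _ hε]

lemma finite_latticePt (hε : 0 < ε) (hΩ : Bornology.IsBounded Ω) :
    {i | latticePt ε Ω i}.Finite := by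
  obtain ⟨C, hC⟩ := Metric.isBounded_iff.1 hΩ
  have hbdd : Bornology.IsBounded {i | latticePt ε Ω i} := by
    refine Metric.isBounded_iff.2 ⟨C / ε, fun i hi j hj => ?_⟩
    rw [le_div_iff₀ hε, mul_comm, ← dist_pt hε.le]
    exact hC hi hj
  exact hbdd.isCompact_closure.finite_of_discrete.subset subset_closure

lemma latticePt_add_of_cellIn (hε : 0 ≤ ε) {i : ℤ × ℤ}
    (hi : cellIn ε Ω i) {d : ℤ × ℤ} (hd : d ∈ Set.Icc 0 1) : latticePt ε Ω (i + d) := by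
  obtain ⟨⟨h₁, h₂⟩, ⟨h₃, h₄⟩⟩ := hd
  apply hi
  simp only [pt, Set.mem_Icc, Prod.mk_le_mk, Prod.fst_add, Prod.snd_add, Prod.mk_add_mk,
    Int.cast_add]
  have h₁' : (0 : ℝ) ≤ d.1 := by exact_mod_cast h₁
  have h₂' : (0 : ℝ) ≤ d.2 := by exact_mod_cast h₂
  have h₃' : (d.1 : ℝ) ≤ 1 := by exact_mod_cast h₃
  have h₄' : (d.2 : ℝ) ≤ 1 := by exact_mod_cast h₄
  refine ⟨⟨?_, ?_⟩, ?_, ?_⟩ <;> nlinarith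

lemma latticePt_of_cellIn (hε : 0 ≤ ε) {i : ℤ × ℤ}
    (hi : cellIn ε Ω i) : latticePt ε Ω i := by
  simpa using latticePt_add_of_cellIn hε hi (d := 0) (by simp)

def cellBond (i : ℤ × ℤ) : Fin 4 → (ℤ × ℤ) × (ℤ × ℤ) :=
  ![(i, i + (0, 1)), (i + (0, 1), i + (1, 1)), (i + (1, 0), i + (1, 1)), (i, i + (1, 0))]

lemma cellBond_injective (k : Fin 4) : Function.Injective (cellBond · k) := by
  intro i j h
  fin_cases k <;> simpa [cellBond] using congrArg Prod.fst h

lemma bond_cellBond (hε : 0 ≤ ε) {i : ℤ × ℤ} (hi : cellIn ε Ω i)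
    (k : Fin 4) : bond ε Ω (cellBond i k).1 (cellBond i k).2 := by
  have := latticePt_of_cellIn hε hi
  have := latticePt_add_of_cellIn hε hi (d := (1, 0)) (by simp [Prod.le_def])
  have := latticePt_add_of_cellIn hε hi (d := (0, 1)) (by simp [Prod.le_def])
  have := latticePt_add_of_cellIn hε hi (d := (1, 1)) (by simp [Prod.le_def])
  fin_cases k <;> simp [cellBond, bond, add_assoc, *]

lemma exists_alphaSD_eq_intCast (u : ℤ × ℤ → ℝ) (i : ℤ × ℤ) : ∃ n : ℤ, alphaSD u i = n :=
  ⟨Pint (u (i + (1, 0)) - u i) + Pint (u (i + (1, 1)) - u (i + (1, 0)))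
    - Pint (u (i + (0, 1)) - u i) - Pint (u (i + (1, 1)) - u (i + (0, 1))), by
      simp only [alphaSD, dcurl, betaE]; push_cast; ring⟩

lemma abs_alphaSD_le (u : ℤ × ℤ → ℝ) (i : ℤ × ℤ) :
    |alphaSD u i| ≤ 4 * ∑ k, betaE u (cellBond i k).1 (cellBond i k).2 ^ 2 := by
  obtain ⟨n, hn⟩ := exists_alphaSD_eq_intCast u i
  have abs_le_sq : |alphaSD u i| ≤ alphaSD u i ^ 2 := by
    rw [hn]
    exact_mod_cast Int.natCast_natAbs n ▸ Int.natAbs_le_self_sq n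
  refine abs_le_sq.trans ?_
  simp only [Fin.sum_univ_four, cellBond, alphaSD, dcurl, Matrix.cons_val]
  generalize betaE u i (i + (0, 1)) = a, betaE u (i + (0, 1)) (i + (1, 1)) = b,
    betaE u (i + (1, 0)) (i + (1, 1)) = c, betaE u i (i + (1, 0)) = d
  nlinarith [sq_nonneg (a - b), sq_nonneg (a + c), sq_nonneg (a + d), sq_nonneg (b + c),
    sq_nonneg (b + d), sq_nonneg (c - d)]

lemma finite_cellIn (hε : 0 < ε) (hΩ : Bornology.IsBounded Ω) :
    Finite {i // cellIn ε Ω i} :=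
  ((finite_latticePt hε hΩ).subset fun _ => latticePt_of_cellIn hε.le).to_subtype

lemma finite_bond (hε : 0 < ε) (hΩ : Bornology.IsBounded Ω) :
    Finite {b : (ℤ × ℤ) × (ℤ × ℤ) // bond ε Ω b.1 b.2} :=
  have hlat := finite_latticePt hε hΩ
  ((hlat.prod hlat).subset fun _ hb => ⟨hb.1, hb.2.1⟩).to_subtype

lemma tsum_cellBond_le_tsum_bond (hε : 0 < ε) (hΩ : Bornology.IsBounded Ω)
    {f : (ℤ × ℤ) × (ℤ × ℤ) → ℝ} (hf : 0 ≤ f) (k : Fin 4) :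
    ∑' i : {i // cellIn ε Ω i}, f (cellBond i k) ≤
      ∑' b : {b : (ℤ × ℤ) × (ℤ × ℤ) // bond ε Ω b.1 b.2}, f b :=
  have := finite_bond hε hΩ
  tsum_comp_le_tsum_of_inj (f := fun b : {b : (ℤ × ℤ) × (ℤ × ℤ) // bond ε Ω b.1 b.2} => f b)
    .of_finite (fun _ => hf _)
    (i := fun i : {i // cellIn ε Ω i} => ⟨cellBond i k, bond_cellBond hε.le i.2 k⟩)
    fun _ _ h => Subtype.ext (cellBond_injective k (congrArg Subtype.val h))

end

/-- There is a universal constant `C > 0` such that for every `ε > 0` and every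
displacement `u : Ω⁰_ε → ℝ`, the total variation of the discrete dislocation measure is
controlled by the screw-dislocation energy: `|μ_u|(Ω) ≤ C · SD_ε(u)`. -/
theorem SD_total_variation_bound :
    ∃ C : ℝ, 0 < C ∧
      ∀ (Ω : Set (ℝ × ℝ)), IsOpen Ω → Bornology.IsBounded Ω →
        ∀ ε : ℝ, 0 < ε → ∀ u : ℤ × ℤ → ℝ,
          SDtv ε Ω u ≤ C * SDen ε Ω u := by
  refine ⟨32, by norm_num, fun Ω _ hΩ ε hε u => ?_⟩
  have := finite_cellIn hε hΩ
  set f : (ℤ × ℤ) × (ℤ × ℤ) → ℝ := fun b => betaE u b.1 b.2 ^ 2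
  calc SDtv ε Ω u ≤ ∑' i : {i // cellIn ε Ω i}, 4 * ∑ k, f (cellBond i k) :=
        Summable.of_finite.tsum_le_tsum (fun i => abs_alphaSD_le u i) .of_finite
    _ = 4 * ∑ k, ∑' i : {i // cellIn ε Ω i}, f (cellBond i k) := by
        rw [tsum_mul_left, Summable.tsum_finsetSum fun _ _ => .of_finite]
    _ ≤ 4 * ∑ _k : Fin 4, ∑' b : {b : (ℤ × ℤ) × (ℤ × ℤ) // bond ε Ω b.1 b.2}, f b := by
        gcongr with k
        exact tsum_cellBond_le_tsum_bond hε hΩ (fun b => sq_nonneg (betaE u b.1 b.2)) k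
    _ = 32 * SDen ε Ω u := by
        simp only [SDen, f, Finset.sum_const, Finset.card_univ, Fintype.card_fin, nsmul_eq_mul]
        ring
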